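/- arXiv:1508.01288 — 4 statements merged into one kernel-verified Lean document; each statement's English description precedes it below -/
import Mathlib

section
/- For arrays a, b : I → V, an index j : I, a value v : V, and a finite set s of indices, the partial equality wr(a, j, v) =_s b holds if and only if either (j ∈ s and a =_s b) or (j ∉ s and a =_{s ∪ {j}} b and b j = v). (This is equivalence (2) of the paper, used in the rewrite rule ElimWrEq.) -/
/-- Partial equality of arrays modulo a set of indices: `a` and `b` agree
outside `s`. -/
def peq {I V : Type*} (s : Set I) (a b : I → V) : Prop :=
  ∀ j, j ∉ s → a j = b j

/-- Equivalence (2): `wr(a,j,v) =_s b` iff `(j ∈ s ∧ a =_s b)` or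
`(j ∉ s ∧ a =_{s ∪ {j}} b ∧ b j = v)`. -/
theorem stmt_1 {I V : Type*} [DecidableEq I] (a b : I → V) (j : I) (v : V)
    (s : Finset I) :
    peq (↑s : Set I) (Function.update a j v) b ↔
      (j ∈ s ∧ peq (↑s : Set I) a b) ∨
      (j ∉ s ∧ peq (↑(s ∪ {j}) : Set I) a b ∧ b j = v) := by
  unfold peq
  by_cases hj : j ∈ s
  · simp only [hj, true_and, not_true, false_and, or_false]
    constructor
    · intro h k hk
      have := h k hk
      rwa [Function.update_of_ne (by rintro rfl; exact hk hj)] at this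
    · intro h k hk
      rw [Function.update_of_ne (by rintro rfl; exact hk hj)]
      exact h k hk
  · simp only [hj, false_and, false_or, not_false_iff, true_and]
    constructor
    · intro h
      refine ⟨fun k hk => ?_, ?_⟩
      · simp only [Finset.coe_union, Finset.coe_singleton, Set.mem_union,
          Set.mem_singleton_iff, not_or] at hk
        have := h k hk.1
        rwa [Function.update_of_ne hk.2] at this
      · have := h j (by simpa using hj)
        simpa using this.symm
    · rintro ⟨h, hbj⟩ k hk
      by_cases hkj : k = j
      · subst hkj; simp [hbj]
      · rw [Function.update_of_ne hkj]
        exact h k (by simp [hk, hkj])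
end

section
/- For arrays a, b : I → V and any vector of indices ī : Fin m → I, the partial equality a =_{range ī} b holds if and only if there exists a vector of values v̄ : Fin m → V such that a = wr(b, ī, v̄), the iterated write of v̄ into b at the positions ī. (This is equivalence (3) of the paper.) -/
/-- Iterated write: update `a` at indices `i k` with values `v k`
successively for `k = 0, 1, …, m-1` (later writes overwrite earlier ones). -/
def iwr {I V : Type*} [DecidableEq I] :
    {m : ℕ} → (I → V) → (Fin m → I) → (Fin m → V) → (I → V)
  | 0, a, _, _ => a
  | m + 1, a, i, v =>
      Function.update (iwr a (fun k => i k.castSucc) (fun k => v k.castSucc))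
        (i (Fin.last m)) (v (Fin.last m))

lemma iwr_notin {I V : Type*} [DecidableEq I] : ∀ {m : ℕ} (b : I → V)
    (i : Fin m → I) (v : Fin m → V) (j : I), j ∉ Set.range i → iwr b i v j = b j
  | 0, b, i, v, j, h => rfl
  | m + 1, b, i, v, j, h => by
    have hj : j ≠ i (Fin.last m) := fun e => h ⟨Fin.last m, e.symm⟩
    simp only [iwr, Function.update_of_ne hj]
    exact iwr_notin b _ _ j (fun ⟨k, hk⟩ => h ⟨k.castSucc, hk⟩)

lemma iwr_in {I V : Type*} [DecidableEq I] : ∀ {m : ℕ} (a b : I → V)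
    (i : Fin m → I) (j : I), j ∈ Set.range i → iwr b i (fun k => a (i k)) j = a j
  | 0, a, b, i, j, h => by simp at h
  | m + 1, a, b, i, j, h => by
    by_cases hj : j = i (Fin.last m)
    · subst hj; simp [iwr]
    · simp only [iwr, Function.update_of_ne hj]
      obtain ⟨k, hk⟩ := h
      rcases Fin.eq_castSucc_or_eq_last k with ⟨k', rfl⟩ | rfl
      · exact iwr_in a b _ j ⟨k', hk⟩
      · exact absurd hk.symm hj

/-- Equivalence (3): `a =_{range ī} b` iff `∃ v̄, a = wr(b, ī, v̄)`. -/
theorem stmt_2 {I V : Type*} [DecidableEq I] {m : ℕ} (a b : I → V)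
    (i : Fin m → I) :
    peq (Set.range i) a b ↔ ∃ v : Fin m → V, a = iwr b i v := by
  constructor
  · intro h
    refine ⟨fun k => a (i k), funext fun j => ?_⟩
    by_cases hr : j ∈ Set.range i
    · exact (iwr_in a b i j hr).symm
    · rw [iwr_notin b i _ j hr]; exact h j hr
  · rintro ⟨v, rfl⟩ j hj
    exact iwr_notin b i v j hj
end

section
/- (Soundness of the rewrite rule ElimDiseq.) Let I be an infinite type and V a type with at least two elements. Let φ : (I → V) → Prop be a predicate that depends only on the values of its argument at a fixed finite set S of indices (i.e., for all arrays a, a', if a j = a' j for all j ∈ S then φ a ↔ φ a'). Let t : Fin m → (I → V) be a family of arrays and s : Fin m → Finset I a family of finite index sets. Then there exists an array a : I → V with φ a and such that for every k : Fin m the partial equality a =_{s k} (t k) fails, if and only if there exists an array a with φ a. -/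
/-- Soundness of the rewrite rule ElimDiseq: over an infinite index domain,
array disequalities on a quantified array that otherwise occurs only through
finitely many read positions can be dropped. -/
theorem stmt_6 {I V : Type*} [Infinite I] (v₁ v₂ : V) (hv : v₁ ≠ v₂)
    (S : Finset I) (φ : (I → V) → Prop)
    (hφ : ∀ a a' : I → V, (∀ j ∈ S, a j = a' j) → (φ a ↔ φ a'))
    {m : ℕ} (t : Fin m → (I → V)) (s : Fin m → Finset I) :
    (∃ a : I → V, φ a ∧ ∀ k : Fin m, ¬ peq (↑(s k) : Set I) a (t k)) ↔
      ∃ a : I → V, φ a := by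
  classical
  constructor
  · rintro ⟨a, ha, -⟩; exact ⟨a, ha⟩
  · rintro ⟨a, ha⟩
    set T : Finset I := S ∪ Finset.univ.biUnion s with hT
    have hc : ((↑T : Set I)ᶜ).Infinite := T.finite_toSet.infinite_compl
    haveI := hc.to_subtype
    let g : Fin m ↪ ((↑T : Set I)ᶜ : Set I) :=
      (Fin.valEmbedding).trans (Infinite.natEmbedding _)
    let f : Fin m → I := fun k => (g k : I)
    have hfinj : Function.Injective f := fun k k' h => g.injective (Subtype.ext h)
    have hfT : ∀ k, f k ∉ T := fun k => (g k).2
    let w : Fin m → V := fun k => if t k (f k) = v₁ then v₂ else v₁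
    have hw : ∀ k, w k ≠ t k (f k) := by
      intro k
      by_cases h : t k (f k) = v₁ <;> simp [w, h, hv, Ne.symm hv]
      exact fun e => h e.symm
    let a' : I → V := fun j => if h : ∃ k, f k = j then w h.choose else a j
    have ha'f : ∀ k, a' (f k) = w k := by
      intro k
      have h : ∃ k', f k' = f k := ⟨k, rfl⟩
      have := hfinj h.choose_spec
      simp only [a', dif_pos h, this]
    have ha'ne : ∀ j, (∀ k, f k ≠ j) → a' j = a j := by
      intro j hj
      have : ¬ ∃ k, f k = j := by rintro ⟨k, rfl⟩; exact hj k rfl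
      simp [a', this]
    refine ⟨a', ?_, ?_⟩
    · rw [hφ a' a ?_]
      · exact ha
      · intro j hj
        refine ha'ne j fun k hk => hfT k ?_
        rw [hk]; exact Finset.mem_union_left _ hj
    · intro k hpeq
      have hns : f k ∉ (↑(s k) : Set I) := by
        intro hmem
        exact hfT k (Finset.mem_union_right _
          (Finset.mem_biUnion.mpr ⟨k, Finset.mem_univ _, hmem⟩))
      have := hpeq (f k) hns
      rw [ha'f k] at this
      exact hw k this
end

section
/- (Soundness of the Ackermann rule.) Let V be a nonempty type, let φ be a proposition not depending on the array variable, and let s : Fin m → V and t : Fin m → I be vectors of value terms and index terms. Then [φ and there exists an array a : I → V with s k = a (t k) for all k : Fin m] holds if and only if [φ and for all k, ℓ : Fin m, t k = t ℓ implies s k = s ℓ]. -/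
/-- Soundness of the Ackermann rule: an existentially quantified array
occurring only in reads at indices `t k`, with read values `s k`, can be
eliminated in favor of functional-congruence constraints. -/
theorem stmt_8 {I V : Type*} [Nonempty V] (φ : Prop) {m : ℕ}
    (s : Fin m → V) (t : Fin m → I) :
    (φ ∧ ∃ a : I → V, ∀ k : Fin m, s k = a (t k)) ↔
      (φ ∧ ∀ k ℓ : Fin m, t k = t ℓ → s k = s ℓ) := by
  constructor
  · rintro ⟨hφ, a, ha⟩
    exact ⟨hφ, fun k ℓ h => by rw [ha k, ha ℓ, h]⟩
  · rintro ⟨hφ, hc⟩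
    classical
    refine ⟨hφ, fun i => if h : ∃ k, t k = i then s h.choose else Classical.arbitrary V,
      fun k => ?_⟩
    have h : ∃ j, t j = t k := ⟨k, rfl⟩
    simp only [dif_pos h]
    exact hc k h.choose h.choose_spec.symm
end
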